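/- Let a be an odd positive integer, 0 < q < 1 real, x ≥ 0, n ≥ 0. Then Σ_{j=0}^{a-1} (-1)^j q^{b j} E_{n,q^a}(b x + b j / a) = Σ_{i=0}^{n} C(n,i) ([b]_q / [a]_q)^i E_{n-i,q^a}(b x) S*_{n,i,q^b}(a), where S*_{n,i,q}(a) = Σ_{j=0}^{a-1} (-1)^j q^{(n+1-i) j} [j]_q^i, for any positive integer b. -/

import Mathlib

open Finset

/-- q-analogue [z]_q = (1 - q^z)/(1 - q) (real rpow). -/
noncomputable def qn (q z : ℝ) : ℝ := (1 - q ^ z) / (1 - q)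

/-- q-Euler polynomial E_{n,q}(x) = [2]_q Σ_{m} (-1)^m q^m [m+x]_q^n. -/
noncomputable def qE (n : ℕ) (q x : ℝ) : ℝ :=
  (1 + q) * ∑' m : ℕ, (-1 : ℝ) ^ m * q ^ m * (qn q ((m : ℝ) + x)) ^ n

/-- Alternating q-power sum S*_{n,i,q}(a). -/
noncomputable def qS (n i a : ℕ) (q : ℝ) : ℝ :=
  ∑ j ∈ Finset.range a, (-1 : ℝ) ^ j * q ^ ((n + 1 - i) * j) * (qn q (j : ℝ)) ^ i

/-! The q-integers satisfy `[s + y]_Q = [s]_Q + Q^s [y]_Q`, so expanding `[m + s + y]_Q^n` binomially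
term by term in the series defining `E_{n,Q}` gives the addition formula
`E_{n,Q}(s + y) = Σ_i C(n,i) [s]_Q^i Q^{s(n-i)} E_{n-i,Q}(y)`. With `Q = q^a`
and `s = b j / a` one has `Q^s = (q^b)^j` and `[s]_Q = ([b]_q / [a]_q) [j]_{q^b}`; summing the
addition formula against `(-1)^j q^{b j}` and exchanging the two finite sums produces `S*`. -/

lemma qn_add {q : ℝ} (hq : 0 < q) (x y : ℝ) : qn q (x + y) = qn q x + q ^ x * qn q y := by
  simp only [qn, Real.rpow_add hq]
  ring

lemma qn_mul {q : ℝ} (hq : 0 < q) (c z : ℝ) : qn q (c * z) = qn q c * qn (q ^ c) z := by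
  by_cases hc : q ^ c = 1
  -- then `q ^ (c * z) = 1` too, and both sides vanish through their numerators
  · simp [qn, Real.rpow_mul hq.le, hc]
  · have hq1 : 1 - q ≠ 0 := by
      rintro h
      rw [← sub_eq_zero.mp h, Real.one_rpow] at hc
      exact hc rfl
    have hc1 : 1 - q ^ c ≠ 0 := sub_ne_zero.mpr (Ne.symm hc)
    simp only [qn, Real.rpow_mul hq.le]
    field_simp

lemma qn_pow_div {q : ℝ} (hq0 : 0 < q) (hq1 : q ≠ 1) {a : ℕ} (ha : a ≠ 0) (t : ℝ) :
    qn (q ^ a) (t / a) = qn q t / qn q a := by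
  have hqa : qn q a ≠ 0 := by
    have : q ^ a ≠ 1 := by rwa [Ne, pow_eq_one_iff_of_nonneg hq0.le ha]
    simp only [qn, Real.rpow_natCast]
    exact div_ne_zero (sub_ne_zero.mpr (Ne.symm this)) (sub_ne_zero.mpr (Ne.symm hq1))
  refine eq_div_of_mul_eq hqa ?_
  rw [mul_comm, ← Real.rpow_natCast, ← qn_mul hq0, mul_div_cancel₀ t (Nat.cast_ne_zero.mpr ha)]

lemma summable_qE {Q : ℝ} (hQ0 : 0 < Q) (hQ1 : Q < 1) (y : ℝ) (k : ℕ) :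
    Summable fun m : ℕ => (-1 : ℝ) ^ m * Q ^ m * qn Q (m + y) ^ k := by
  have h1 : 0 < 1 - Q := by linarith
  refine Summable.of_norm_bounded ((summable_geometric_of_lt_one hQ0.le hQ1).mul_left
    (((1 + Q ^ y) / (1 - Q)) ^ k)) fun m => ?_
  have hbound : |qn Q (m + y)| ≤ (1 + Q ^ y) / (1 - Q) := by
    have hmono : Q ^ ((m : ℝ) + y) ≤ Q ^ y :=
      Real.rpow_le_rpow_of_exponent_ge hQ0 hQ1.le (by linarith [m.cast_nonneg (α := ℝ)])
    rw [qn, abs_div, abs_of_pos h1]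
    gcongr
    exact (abs_sub _ _).trans (by rw [abs_one, abs_of_pos (Real.rpow_pos_of_pos hQ0 _)]; linarith)
  simp only [norm_mul, norm_pow, norm_neg, norm_one, one_pow, one_mul, Real.norm_eq_abs,
    abs_of_pos hQ0]
  rw [mul_comm]
  gcongr

lemma qE_add {Q : ℝ} (hQ0 : 0 < Q) (hQ1 : Q < 1) (n : ℕ) (s y : ℝ) :
    qE n Q (s + y) =
      ∑ i ∈ range (n + 1), (n.choose i : ℝ) * qn Q s ^ i * (Q ^ s) ^ (n - i) * qE (n - i) Q y := by
  have hterm : ∀ m : ℕ, (-1 : ℝ) ^ m * Q ^ m * qn Q (m + (s + y)) ^ n =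
      ∑ i ∈ range (n + 1), ((n.choose i : ℝ) * qn Q s ^ i * (Q ^ s) ^ (n - i)) *
        ((-1 : ℝ) ^ m * Q ^ m * qn Q (m + y) ^ (n - i)) := by
    intro m
    rw [show (m : ℝ) + (s + y) = s + (m + y) by ring, qn_add hQ0, add_pow, mul_sum]
    refine sum_congr rfl fun i _ => ?_
    rw [mul_pow]
    ring
  simp only [qE]
  rw [tsum_congr hterm, Summable.tsum_finsetSum fun i _ => (summable_qE hQ0 hQ1 y _).mul_left _,
    mul_sum]
  refine sum_congr rfl fun i _ => ?_
  rw [tsum_mul_left]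
  ring

theorem qEuler_sum_expansion_general (q : ℝ) (hq0 : 0 < q) (hq1 : q < 1) (x : ℝ)
    (n a b : ℕ) :
    ∑ j ∈ Finset.range a, (-1 : ℝ) ^ j * q ^ (b * j) *
        qE n (q ^ a) ((b : ℝ) * x + (b : ℝ) * (j : ℝ) / (a : ℝ)) =
      ∑ i ∈ Finset.range (n + 1), (n.choose i : ℝ) * (qn q (b : ℝ) / qn q (a : ℝ)) ^ i *
        qE (n - i) (q ^ a) ((b : ℝ) * x) * qS n i a (q ^ b) := by
  have hterm : ∀ j ∈ range a, (-1 : ℝ) ^ j * q ^ (b * j) *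
      qE n (q ^ a) ((b : ℝ) * x + (b : ℝ) * (j : ℝ) / (a : ℝ)) =
      ∑ i ∈ range (n + 1), (n.choose i : ℝ) * (qn q b / qn q a) ^ i * qE (n - i) (q ^ a) (b * x) *
        ((-1 : ℝ) ^ j * (q ^ b) ^ ((n + 1 - i) * j) * qn (q ^ b) j ^ i) := by
    intro j hj
    have ha : a ≠ 0 := Nat.ne_zero_of_lt (mem_range.mp hj)
    have hshift : (q ^ a) ^ ((b : ℝ) * j / a) = (q ^ b) ^ j := by
      rw [← Real.rpow_natCast q a, ← Real.rpow_mul hq0.le, mul_div_cancel₀ _ (by exact_mod_cast ha),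
        Real.rpow_mul hq0.le, Real.rpow_natCast, Real.rpow_natCast]
    rw [add_comm, qE_add (pow_pos hq0 a) (pow_lt_one₀ hq0.le hq1 ha), hshift,
      qn_pow_div hq0 hq1.ne ha, qn_mul hq0, Real.rpow_natCast, mul_sum]
    refine sum_congr rfl fun i hi => ?_
    have hexp : q ^ (b * j) * ((q ^ b) ^ j) ^ (n - i) = (q ^ b) ^ ((n + 1 - i) * j) := by
      rw [pow_mul, ← pow_succ', ← pow_mul, Nat.sub_add_comm (mem_range_succ_iff.mp hi), mul_comm]
    rw [← hexp]
    ring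
  rw [sum_congr rfl hterm, sum_comm]
  exact sum_congr rfl fun i _ => by rw [qS, mul_sum]

theorem qEuler_sum_expansion (q : ℝ) (hq0 : 0 < q) (hq1 : q < 1) (x : ℝ) (hx : 0 ≤ x)
    (n a b : ℕ) (ha : 0 < a) (hao : Odd a) (hb : 0 < b) :
    ∑ j ∈ Finset.range a, (-1 : ℝ) ^ j * q ^ (b * j) *
        qE n (q ^ a) ((b : ℝ) * x + (b : ℝ) * (j : ℝ) / (a : ℝ)) =
      ∑ i ∈ Finset.range (n + 1), (n.choose i : ℝ) * (qn q (b : ℝ) / qn q (a : ℝ)) ^ i *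
        qE (n - i) (q ^ a) ((b : ℝ) * x) * qS n i a (q ^ b) :=
  qEuler_sum_expansion_general q hq0 hq1 x n a b
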